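/- arXiv:1505.01307 — 3 statements merged into one kernel-verified Lean document; each statement's English description precedes it below -/
import Mathlib

section
/- Let f : A → B be an epimorphism of commutative rings such that B is flat as an A-module. If A is Noetherian (every finitely generated A-module is finitely presented), then every finitely generated B-module is finitely presented as a B-module. -/
open TensorProduct

/-- If `A → B` is a ring epimorphism, then `b ⊗ 1 = 1 ⊗ b` in `B ⊗[A] B`. -/
lemma tmul_one_eq_one_tmul_of_epi {A B : Type u} [CommRing A] [CommRing B] [Algebra A B]
    (hepi : ∀ (C : Type u) [CommRing C] (g₁ g₂ : B →+* C),
      g₁.comp (algebraMap A B) = g₂.comp (algebraMap A B) → g₁ = g₂) (b : B) :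
    (b ⊗ₜ[A] (1 : B) : B ⊗[A] B) = (1 : B) ⊗ₜ[A] b := by
  have h := hepi (B ⊗[A] B)
    (Algebra.TensorProduct.includeLeftRingHom (R := A) (A := B) (B := B))
    (Algebra.TensorProduct.includeRight (R := A) (A := B) (B := B)).toRingHom
    (by ext a
        show (algebraMap A B a) ⊗ₜ[A] (1 : B) = (1 : B) ⊗ₜ[A] (algebraMap A B a)
        rw [Algebra.algebraMap_eq_smul_one]
        exact TensorProduct.smul_tmul a 1 1)
  exact congrArg (fun g => g b) h

/-- If `f : A → B` is an epimorphism of commutative rings with `B` flat over `A`, and every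
finitely generated `A`-module is finitely presented, then every finitely generated `B`-module
is finitely presented. -/
theorem noetherian_descends_along_flat_epi {A B : Type u} [CommRing A] [CommRing B]
    [Algebra A B]
    (hepi : ∀ (C : Type u) [CommRing C] (g₁ g₂ : B →+* C),
      g₁.comp (algebraMap A B) = g₂.comp (algebraMap A B) → g₁ = g₂)
    [Module.Flat A B]
    (hA : ∀ (M : Type u) [AddCommGroup M] [Module A M],
      Module.Finite A M → Module.FinitePresentation A M)
    (N : Type u) [AddCommGroup N] [Module B N] (hN : Module.Finite B N) :
    Module.FinitePresentation B N := by
  have key : ∀ b : B, (b ⊗ₜ[A] (1 : B) : B ⊗[A] B) = (1 : B) ⊗ₜ[A] b :=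
    tmul_one_eq_one_tmul_of_epi hepi
  -- Step 1: A is Noetherian
  have hNoethA : IsNoetherianRing A := by
    rw [isNoetherianRing_iff_ideal_fg]
    intro I
    have hfin : Module.Finite A (A ⧸ I) := Module.Finite.of_surjective
      (I.mkQ) (Submodule.mkQ_surjective I)
    have hfp := hA (A ⧸ I) hfin
    have := Module.FinitePresentation.fg_ker (R := A) (I.mkQ) (Submodule.mkQ_surjective I)
    rwa [Submodule.ker_mkQ] at this
  -- Step 2: every ideal of B is extended from A
  have hext : ∀ J : Ideal B, J = (J.comap (algebraMap A B)).map (algebraMap A B) := by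
    intro J
    set I : Ideal A := J.comap (algebraMap A B) with hI
    apply le_antisymm
    · intro b hb
      -- f : A ⧸ I →ₗ[A] B ⧸ J, injective
      set g : A →ₗ[A] B ⧸ J :=
        (Ideal.Quotient.mkₐ A J).toLinearMap.comp (Algebra.linearMap A B) with hg
      have hgapp : ∀ a : A, g a = Ideal.Quotient.mk J (algebraMap A B a) := fun _ => rfl
      have hIg : (I : Submodule A A) ≤ LinearMap.ker g := by
        intro a ha
        rw [LinearMap.mem_ker, hgapp, Ideal.Quotient.eq_zero_iff_mem]
        exact ha
      set f : (A ⧸ I) →ₗ[A] B ⧸ J := Submodule.liftQ I g hIg with hf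
      have hfinj : Function.Injective f := by
        rw [← LinearMap.ker_eq_bot, Submodule.ker_liftQ_eq_bot']
        ext a
        rw [LinearMap.mem_ker, hgapp, Ideal.Quotient.eq_zero_iff_mem]
        exact Iff.rfl
      -- μ : B ⊗[A] (B ⧸ J) →ₗ[A] B ⧸ J, the action map, injective
      set l : B →ₗ[A] (B ⧸ J) →ₗ[A] (B ⧸ J) := LinearMap.mk₂ A (fun b x => b • x)
        (fun b₁ b₂ x => add_smul b₁ b₂ x)
        (fun a b x => by rw [← smul_assoc])
        (fun b x₁ x₂ => smul_add b x₁ x₂)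
        (fun a b x => by rw [smul_comm]) with hl
      set μ : B ⊗[A] (B ⧸ J) →ₗ[A] B ⧸ J := TensorProduct.lift l with hμ
      have hμs : ∀ y : B ⊗[A] (B ⧸ J), (1 : B) ⊗ₜ[A] (μ y) = y := by
        intro y
        induction y using TensorProduct.induction_on with
        | zero => simp
        | tmul c x =>
          obtain ⟨d, rfl⟩ := Ideal.Quotient.mk_surjective (I := J) x
          have : μ (c ⊗ₜ[A] (Ideal.Quotient.mk J d)) = Ideal.Quotient.mk J (c * d) := by
            simp only [μ, l, TensorProduct.lift.tmul, LinearMap.mk₂_apply]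
            rw [Algebra.smul_def, Ideal.Quotient.algebraMap_eq, ← map_mul]
          rw [this]
          -- reduce to an identity in B ⊗[A] B via lTensor of quotient map
          have hq : ∀ (b₁ b₂ : B),
              (b₁ ⊗ₜ[A] (Ideal.Quotient.mk J b₂) : B ⊗[A] (B ⧸ J)) =
              (LinearMap.lTensor B (Ideal.Quotient.mkₐ A J).toLinearMap) (b₁ ⊗ₜ[A] b₂) := by
            intro b₁ b₂; simp
          rw [hq, hq]
          congr 1
          calc (1 : B) ⊗ₜ[A] (c * d) = ((1 : B) ⊗ₜ[A] c) * ((1 : B) ⊗ₜ[A] d) := by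
                rw [Algebra.TensorProduct.tmul_mul_tmul, one_mul]
            _ = (c ⊗ₜ[A] (1 : B)) * ((1 : B) ⊗ₜ[A] d) := by rw [key c]
            _ = c ⊗ₜ[A] d := by rw [Algebra.TensorProduct.tmul_mul_tmul, one_mul, mul_one]
        | add y₁ y₂ h₁ h₂ =>
          rw [map_add, TensorProduct.tmul_add, h₁, h₂]
      have hμinj : Function.Injective μ := by
        intro y₁ y₂ h
        rw [← hμs y₁, ← hμs y₂, h]
      -- η : B ⊗[A] (A ⧸ I) → B ⊗[A] (B ⧸ J), injective by flatness
      have hηinj : Function.Injective (LinearMap.lTensor B f) :=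
        Module.Flat.lTensor_preserves_injective_linearMap f hfinj
      -- now chase the element b
      have hb0 : (LinearMap.lTensor B f) (b ⊗ₜ[A] (Ideal.Quotient.mk I 1)) = 0 := by
        apply hμinj
        have : (LinearMap.lTensor B f) (b ⊗ₜ[A] (Ideal.Quotient.mk I 1)) =
            b ⊗ₜ[A] (Ideal.Quotient.mk J 1) := by
          rw [LinearMap.lTensor_tmul]
          congr 1
          exact (hgapp 1).trans (by rw [map_one, map_one])
        rw [this, map_zero]
        have : μ (b ⊗ₜ[A] (Ideal.Quotient.mk J 1)) = Ideal.Quotient.mk J b := by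
          simp only [μ, l, TensorProduct.lift.tmul, LinearMap.mk₂_apply]
          rw [Algebra.smul_def, Ideal.Quotient.algebraMap_eq, ← map_mul, mul_one]
        rw [this, Ideal.Quotient.eq_zero_iff_mem]
        exact hb
      have hb1 : (b ⊗ₜ[A] (Ideal.Quotient.mk I 1) : B ⊗[A] (A ⧸ I)) = 0 := hηinj (by simpa using hb0)
      have : (TensorProduct.tensorQuotEquivQuotSMul B I) (b ⊗ₜ[A] (Ideal.Quotient.mk I 1)) =
          Submodule.Quotient.mk b := by
        rw [TensorProduct.tensorQuotEquivQuotSMul_tmul_mk, one_smul]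
      have hbmem : b ∈ (I • (⊤ : Submodule A B) : Submodule A B) := by
        rw [← Submodule.Quotient.mk_eq_zero, ← this, hb1, map_zero]
      rwa [Ideal.smul_top_eq_map, Submodule.restrictScalars_mem] at hbmem
    · rw [Ideal.map_le_iff_le_comap]
  -- Step 3: B is Noetherian
  have hNoethB : IsNoetherianRing B := by
    rw [isNoetherianRing_iff_ideal_fg]
    intro J
    rw [hext J]
    exact Ideal.FG.map ((isNoetherianRing_iff_ideal_fg A).mp hNoethA _) _
  exact Module.finitePresentation_of_finite B N
end

section
/- Let A be an abelian category and K an object of A such that: (i) every subobject of K is 0 or K, and (ii) for every epimorphism f : L → K in A, the induced map Hom(K, L) → Hom(K, K) is surjective. Then K is a projective object of A. -/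
open CategoryTheory CategoryTheory.Limits

/-- In an abelian category, if every subobject of `K` is `⊥` or `⊤` and for every
epimorphism `f : L ⟶ K` the induced map `Hom(K, L) → Hom(K, K)` is surjective, then `K`
is projective. -/
theorem projective_of_simple_of_lifting {A : Type u} [Category.{v} A] [Abelian A]
    (K : A)
    (hsub : ∀ S : Subobject K, S = ⊥ ∨ S = ⊤)
    (hlift : ∀ (L : A) (f : L ⟶ K), Epi f →
      Function.Surjective (fun g : K ⟶ L => g ≫ f)) :
    Projective K := by
  constructor
  intro E X g e he
  obtain ⟨h, hh⟩ := hlift (pullback e g) (pullback.snd e g) inferInstance (𝟙 K)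
  refine ⟨h ≫ pullback.fst e g, ?_⟩
  simp only at hh
  rw [Category.assoc, pullback.condition, ← Category.assoc, hh, Category.id_comp]
end

section
/- Let A, B be commutative rings with A such that every finitely generated A-module is finitely presented, and let F : A-Mod → B-Mod be an additive functor that preserves small colimits, is symmetric monoidal (strong tensor, so F(A) ≅ B and F(M ⊗_A N) ≅ F(M) ⊗_B F(N)), and sends A^n to B^n compatibly. Then there is a ring homomorphism f : A → B with F naturally isomorphic to the extension of scalars functor M ↦ B ⊗_A M. -/
/-!
Up to unitors, multiplication by `a : A` on `M` is `(a • 𝟙_) ▷ M`, so a monoidal `F` sends it to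
multiplication by the scalar `f a` through which `F` acts on `F (𝟙_) ≅ B`. This ring map `f` makes
`m ↦ F (a ↦ a • m) (ε 1)` an `A`-linear natural map `M → F M`. Its adjoint `B ⊗_A M → F M` is
`ε_F ∘ ε⁻¹` at `M = A`, hence an isomorphism there, hence on free modules (coproducts of copies
of `A`), hence everywhere: every module is a cokernel of a map of free modules and both functors
are cocontinuous.
-/

open CategoryTheory Limits MonoidalCategory

universe u

namespace ModuleCat

section Colimits

variable {R : Type u} [CommRing R] {D : Type*} [Category.{u} D] {G₁ G₂ : ModuleCat.{u} R ⥤ D}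

theorem isIso_app_finsupp (α : G₁ ⟶ G₂) [IsIso (α.app (of R R))] (ι : Type u)
    [PreservesColimitsOfShape (Discrete ι) G₁] [PreservesColimitsOfShape (Discrete ι) G₂] :
    IsIso (α.app (of R (ι →₀ R))) := by
  let K := Discrete.functor fun _ : ι ↦ of R R
  have (i : Discrete ι) : IsIso ((Functor.whiskerLeft K α).app i) := by
    dsimp [K]; infer_instance
  have : IsIso (Functor.whiskerLeft K α) := NatIso.isIso_of_isIso_app _
  exact isIso_app_coconePt_of_preservesColimit K α _ (finsuppCoconeIsColimit R R ι)

theorem isIso_of_isIso_app_self (α : G₁ ⟶ G₂) [IsIso (α.app (of R R))]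
    [PreservesColimits G₁] [PreservesColimits G₂] : IsIso α := by
  suffices ∀ M, IsIso (α.app M) from NatIso.isIso_of_isIso_app _
  intro M
  let pres := Module.Presentation.tautological R M
  let S := ShortComplex.moduleCatMk pres.map pres.π pres.π_comp_map
  have hS : S.Exact :=
    (ShortComplex.ShortExact.moduleCat_exact_iff_function_exact S).mpr pres.exact
  have : Epi S.g := (epi_iff_surjective _).mpr pres.surjective_π
  have (j : WalkingParallelPair) : IsIso ((Functor.whiskerLeft (parallelPair S.f 0) α).app j) := by
    cases j <;> exact isIso_app_finsupp α _
  have : IsIso (Functor.whiskerLeft (parallelPair S.f 0) α) := NatIso.isIso_of_isIso_app _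
  exact isIso_app_coconePt_of_preservesColimit _ α _ hS.gIsCokernel

end Colimits

section Scalars

variable {R : Type u} [CommRing R]

theorem smul_id_eq_leftUnitor_conj (r : R) (M : ModuleCat.{u} R) :
    r • 𝟙 M = (λ_ M).inv ≫ (r • 𝟙 (𝟙_ (ModuleCat R))) ▷ M ≫ (λ_ M).hom := by
  ext x
  simp

theorem endo_tensorUnit_eq_smul_id (g : 𝟙_ (ModuleCat.{u} R) ⟶ 𝟙_ (ModuleCat R)) :
    g = (g (1 : R) : R) • 𝟙 (𝟙_ (ModuleCat R)) := by
  ext : 1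
  exact LinearMap.ext_ring (mul_one _).symm

noncomputable def toSpanSingleton {M : ModuleCat.{u} R} (m : M) : 𝟙_ (ModuleCat R) ⟶ M :=
  ofHom (LinearMap.toSpanSingleton R M m)

theorem toSpanSingleton_comp {M N : ModuleCat.{u} R} (m : M) (g : M ⟶ N) :
    toSpanSingleton m ≫ g = toSpanSingleton (g m) := by
  ext : 1
  exact LinearMap.ext_ring (by simp [toSpanSingleton])

theorem toSpanSingleton_add {M : ModuleCat.{u} R} (m m' : M) :
    toSpanSingleton (m + m') = toSpanSingleton m + toSpanSingleton m' := by
  ext : 1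
  exact LinearMap.toSpanSingleton_add m m'

theorem toSpanSingleton_smul {M : ModuleCat.{u} R} (r : R) (m : M) :
    toSpanSingleton (r • m) = toSpanSingleton m ≫ (r • 𝟙 M) := by
  ext : 1
  exact LinearMap.ext_ring (by simp [toSpanSingleton])

theorem toSpanSingleton_one : toSpanSingleton (1 : R) = 𝟙 (𝟙_ (ModuleCat R)) := by
  ext : 1
  exact LinearMap.ext_ring (by simp [toSpanSingleton])

end Scalars

section MonoidalFunctor

open Functor.Monoidal

variable {A B : Type u} [CommRing A] [CommRing B]
  (F : ModuleCat.{u} A ⥤ ModuleCat.{u} B) [F.Additive] [F.Monoidal]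

noncomputable def ringHomOfMonoidal : A →+* B where
  toFun a := (εIso F).inv (F.map (a • 𝟙 (𝟙_ (ModuleCat A))) ((εIso F).hom 1))
  map_one' := by simpa using (εIso F).hom_inv_id_apply 1
  map_zero' := by simp
  map_add' a a' := by simp [add_smul]
  map_mul' a a' := by
    set e := εIso F
    have hcomp : (a * a') • 𝟙 (𝟙_ (ModuleCat A)) = (a' • 𝟙 _) ≫ (a • 𝟙 _) := by simp [mul_smul]
    set b' := e.inv (F.map (a' • 𝟙 (𝟙_ (ModuleCat A))) (e.hom 1))
    have hb' : F.map (a' • 𝟙 (𝟙_ (ModuleCat A))) (e.hom 1) = b' • e.hom 1 := by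
      rw [← map_smul, smul_eq_mul, mul_one, e.inv_hom_id_apply]
    rw [hcomp, F.map_comp, ModuleCat.comp_apply, hb', map_smul, map_smul, smul_eq_mul, mul_comm]

theorem map_smul_id_unit (a : A) :
    (εIso F).hom ≫ F.map (a • 𝟙 (𝟙_ (ModuleCat A))) ≫ (εIso F).inv =
      ringHomOfMonoidal F a • 𝟙 (𝟙_ (ModuleCat B)) :=
  endo_tensorUnit_eq_smul_id _

theorem map_smul_id (a : A) (M : ModuleCat.{u} A) :
    F.map (a • 𝟙 M) = ringHomOfMonoidal F a • 𝟙 (F.obj M) := by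
  rw [smul_id_eq_leftUnitor_conj a, F.map_comp, F.map_comp, map_leftUnitor_inv, map_whiskerRight,
    map_leftUnitor, smul_id_eq_leftUnitor_conj (ringHomOfMonoidal F a), ← map_smul_id_unit]
  simp [MonoidalCategory.comp_whiskerRight]

noncomputable def toRestrictScalarsOfMonoidal :
    𝟭 (ModuleCat A) ⟶ F ⋙ restrictScalars (ringHomOfMonoidal F) where
  app M := ofHom (X := M) (Y := (restrictScalars (ringHomOfMonoidal F)).obj (F.obj M))
    { toFun m := F.map (toSpanSingleton m) ((εIso F).hom 1)
      map_add' m m' := by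
        rw [toSpanSingleton_add, F.map_add]
        rfl
      map_smul' a m := by
        rw [toSpanSingleton_smul, F.map_comp, map_smul_id]
        rfl }
  naturality M N g := by
    ext m
    change F.map (toSpanSingleton (g m)) _ = F.map g (F.map (toSpanSingleton m) _)
    rw [← toSpanSingleton_comp, F.map_comp]
    rfl

noncomputable def extendScalarsToMonoidal :
    extendScalars (ringHomOfMonoidal F) ⟶ F where
  app M := ((extendRestrictScalarsAdj _).homEquiv _ _).symm
    ((toRestrictScalarsOfMonoidal F).app M)
  naturality M N g := by
    rw [← Adjunction.homEquiv_naturality_left_symm, ← Adjunction.homEquiv_naturality_right_symm]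
    exact congrArg _ ((toRestrictScalarsOfMonoidal F).naturality g)

theorem ε_comp_extendScalarsToMonoidal_app :
    Functor.LaxMonoidal.ε (extendScalars (ringHomOfMonoidal F)) ≫
      (extendScalarsToMonoidal F).app (𝟙_ (ModuleCat A)) = Functor.LaxMonoidal.ε F := by
  ext : 1
  refine LinearMap.ext_ring ?_
  change ((extendRestrictScalarsAdj _).homEquiv _ _).symm
    ((toRestrictScalarsOfMonoidal F).app (𝟙_ (ModuleCat A))) ((1 : B) ⊗ₜ (1 : A)) = _
  rw [← extendRestrictScalarsAdj_homEquiv_apply, Equiv.apply_symm_apply]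
  change F.map (toSpanSingleton (M := 𝟙_ (ModuleCat A)) 1) _ = _
  rw [toSpanSingleton_one, F.map_id]
  rfl

theorem isIso_extendScalarsToMonoidal_app_self :
    IsIso ((extendScalarsToMonoidal F).app (of A A)) := by
  have h := ε_comp_extendScalarsToMonoidal_app F
  rw [← IsIso.eq_inv_comp] at h
  change IsIso ((extendScalarsToMonoidal F).app (𝟙_ (ModuleCat A)))
  rw [h]
  infer_instance

end MonoidalFunctor

end ModuleCat

theorem cocontinuous_monoidal_functor_is_extension_of_scalars_general
    {A B : Type u} [CommRing A] [CommRing B]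
    (F : ModuleCat.{u} A ⥤ ModuleCat.{u} B) [F.Additive] [F.Braided]
    [Limits.PreservesColimits F] :
    ∃ f : A →+* B, Nonempty (F ≅ ModuleCat.extendScalars f) := by
  have := ModuleCat.isIso_extendScalarsToMonoidal_app_self F
  have : IsIso (ModuleCat.extendScalarsToMonoidal F) := ModuleCat.isIso_of_isIso_app_self _
  exact ⟨ModuleCat.ringHomOfMonoidal F, ⟨(asIso (ModuleCat.extendScalarsToMonoidal F)).symm⟩⟩

/-- Let `A`, `B` be commutative rings such that every finitely generated `A`-module is
finitely presented.  Any additive, cocontinuous, strong symmetric monoidal functor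
`F : A-Mod → B-Mod` is naturally isomorphic to extension of scalars along some ring
homomorphism `f : A → B`. -/
theorem cocontinuous_monoidal_functor_is_extension_of_scalars
    {A B : Type u} [CommRing A] [CommRing B]
    (hA : ∀ (M : Type u) [AddCommGroup M] [Module A M],
      Module.Finite A M → Module.FinitePresentation A M)
    (F : ModuleCat.{u} A ⥤ ModuleCat.{u} B) [F.Additive] [F.Braided]
    [Limits.PreservesColimits F] :
    ∃ f : A →+* B, Nonempty (F ≅ ModuleCat.extendScalars f) :=
  cocontinuous_monoidal_functor_is_extension_of_scalars_general F
end
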